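/- arXiv:0810.4758 — 2 statements merged into one kernel-verified Lean document; each statement's English description precedes it below -/
import Mathlib

section
/- Let λ ∈ ℚ^n be dominant and regular and let w ∈ S_n. Then the intersection of the set { w·λ + ∑_{α∈I} α : I ⊆ Φ⁺ } with the orbit { w'λ : w' ∈ S_n } is exactly the singleton { wλ }. (This is the first equality of Lemma 3(i): ({w·λ} + P) ∩ Wλ = {wλ}.) -/
open Finset

/-- The positive root `ε_i − ε_j` (for `i < j`) of `gl_n`, as a vector in `ℚ^n`. -/
def posRoot {n : ℕ} (i j : Fin n) : Fin n → ℚ :=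
  fun k => (if k = i then 1 else 0) - (if k = j then 1 else 0)

/-- The set `Φ⁺ = { ε_i − ε_j : i < j }` of positive roots of `gl_n`. -/
def PosRoots (n : ℕ) : Finset (Fin n → ℚ) :=
  ((Finset.univ : Finset (Fin n × Fin n)).filter (fun p => p.1 < p.2)).image
    (fun p => posRoot p.1 p.2)

/-- The action of `S_n` on weights by permuting coordinates: `(wλ)_i = λ_{w⁻¹ i}`. -/
def wAct {n : ℕ} (w : Equiv.Perm (Fin n)) (v : Fin n → ℚ) : Fin n → ℚ :=
  fun i => v (w⁻¹ i)

/-- `ρ = (1/2) ∑_{α ∈ Φ⁺} α`. -/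
def rho (n : ℕ) : Fin n → ℚ := (1 / 2 : ℚ) • ∑ α ∈ PosRoots n, α

/-- The dot action `w·λ = w(λ+ρ) − ρ`. -/
def dotAct {n : ℕ} (w : Equiv.Perm (Fin n)) (lam : Fin n → ℚ) : Fin n → ℚ :=
  wAct w (lam + rho n) - rho n

/-- A weight is integral if all of its coordinates are integers. -/
def Integral {n : ℕ} (lam : Fin n → ℚ) : Prop := ∀ i, ∃ m : ℤ, lam i = (m : ℚ)

/-- A weight is dominant if it is integral and `λ_i − λ_{i+1} ≥ 0` for all consecutive `i`. -/
def Dominant {n : ℕ} (lam : Fin n → ℚ) : Prop :=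
  Integral lam ∧ ∀ i j : Fin n, (i : ℕ) + 1 = (j : ℕ) → 0 ≤ lam i - lam j

/-- A weight is regular if `λ_i − λ_j` is a nonzero integer for all `i ≠ j`. -/
def Regular {n : ℕ} (lam : Fin n → ℚ) : Prop :=
  ∀ i j : Fin n, i ≠ j → ∃ m : ℤ, m ≠ 0 ∧ lam i - lam j = (m : ℚ)

/-!
Write a point of the orbit as `w' λ = w·λ + ∑_{α ∈ I} α`. Since `w·λ = wλ - ∑_{α ∈ N} α`, where `N`
is the set of positive roots sent to negative roots by `w⁻¹`, applying the functional
`v ↦ ∑_{k ≤ j} v (w k)`, which is `≤ 0` on `N` and `≥ 0` on the other positive roots, gives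
`∑_{k ≤ j} λ (σ k) ≥ ∑_{k ≤ j} λ k` for `σ = w'⁻¹ w` and every `j`. As `λ` is strictly
decreasing, this forces `σ = 1`.
-/

open Equiv

section

variable {n : ℕ}

lemma posRoot_apply (p q k : Fin n) :
    posRoot p q k = (if k = p then 1 else 0) - (if k = q then 1 else 0) := rfl

lemma posRoot_injOn : Set.InjOn (fun x : Fin n × Fin n => posRoot x.1 x.2) {x | x.1 < x.2} := by
  rintro ⟨p, q⟩ (hpq : p < q) ⟨p', q'⟩ - h
  have hp : (1 : ℚ) = (if p = p' then 1 else 0) - (if p = q' then 1 else 0) := by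
    simpa [posRoot_apply, hpq.ne] using congrFun h p
  have hq : (-1 : ℚ) = (if q = p' then 1 else 0) - (if q = q' then 1 else 0) := by
    simpa [posRoot_apply, hpq.ne'] using congrFun h q
  refine Prod.ext (show p = p' from ?_) (show q = q' from ?_) <;> by_contra hne
  · rw [if_neg hne] at hp
    split_ifs at hp <;> norm_num at hp
  · rw [if_neg hne] at hq
    split_ifs at hq <;> norm_num at hq

lemma sum_posRoot_filter_apply (C : Fin n → Fin n → Prop) [DecidableRel C] (i : Fin n) :
    (∑ x ∈ univ.filter (fun x : Fin n × Fin n => C x.1 x.2), posRoot x.1 x.2) i =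
      ∑ q, (if C i q then 1 else 0) - ∑ p, (if C p i then 1 else 0) := by
  rw [Finset.sum_apply, Finset.sum_filter, Fintype.sum_prod_type]
  simp only [posRoot_apply]
  have hsplit : ∀ p q : Fin n,
      (if C p q then (if i = p then (1 : ℚ) else 0) - (if i = q then 1 else 0) else 0) =
        (if i = p then (if C p q then 1 else 0) else 0) -
          (if i = q then (if C p q then 1 else 0) else 0) := by
    intro p q; split_ifs <;> simp
  simp only [hsplit, Finset.sum_sub_distrib]
  rw [Finset.sum_comm (f := fun p q => if i = q then (if C p q then (1 : ℚ) else 0) else 0)]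
  simp

/-- The positive roots `α` such that `w⁻¹ α` is negative. -/
def inversionRoots (w : Perm (Fin n)) : Finset (Fin n → ℚ) :=
  (univ.filter fun x : Fin n × Fin n => x.1 < x.2 ∧ w⁻¹ x.2 < w⁻¹ x.1).image
    fun x => posRoot x.1 x.2

lemma inversionRoots_subset (w : Perm (Fin n)) : inversionRoots w ⊆ PosRoots n :=
  image_subset_image (monotone_filter_right _ fun _ _ h => h.1)

lemma sum_image_posRoot_apply (C : Fin n → Fin n → Prop) [DecidableRel C]
    (hC : ∀ p q, C p q → p < q) (i : Fin n) :
    (∑ α ∈ (univ.filter fun x : Fin n × Fin n => C x.1 x.2).image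
      (fun x => posRoot x.1 x.2), α) i =
      ∑ q, (if C i q then 1 else 0) - ∑ p, (if C p i then 1 else 0) := by
  rw [sum_image (posRoot_injOn.mono fun x hx => hC _ _ (mem_filter.1 hx).2),
    sum_posRoot_filter_apply]

lemma rho_apply (k : Fin n) :
    rho n k = ((∑ q, if k < q then 1 else 0) - ∑ q, if q < k then 1 else 0) / 2 := by
  rw [rho, Pi.smul_apply, smul_eq_mul, PosRoots, sum_image_posRoot_apply (· < ·) fun _ _ h => h]
  ring

lemma rho_sub_wAct_rho (w : Perm (Fin n)) :
    rho n - wAct w (rho n) = ∑ α ∈ inversionRoots w, α := by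
  funext i
  set b := w⁻¹
  have hrho_b : rho n (b i) =
      ((∑ q, if b i < b q then 1 else 0) - ∑ q, if b q < b i then 1 else 0) / 2 := by
    rw [rho_apply, Equiv.sum_comp b (fun q => if b i < q then (1 : ℚ) else 0),
      Equiv.sum_comp b (fun q => if q < b i then (1 : ℚ) else 0)]
  have hpointwise : ∀ q, ((if i < q then (1 : ℚ) else 0) - (if q < i then 1 else 0)) -
      ((if b i < b q then 1 else 0) - (if b q < b i then 1 else 0)) =
      2 * ((if i < q ∧ b q < b i then 1 else 0) - (if q < i ∧ b i < b q then 1 else 0)) := by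
    intro q
    rcases eq_or_ne q i with rfl | hqi
    · simp
    have hb : b q ≠ b i := b.injective.ne hqi
    rcases hqi.lt_or_gt with h | h <;> rcases hb.lt_or_gt with h' | h' <;>
      simp [h, h', h.not_gt, h'.not_gt] <;> norm_num
  have hsum := Finset.sum_congr rfl fun q (_ : q ∈ univ) => hpointwise q
  simp only [Finset.sum_sub_distrib, ← Finset.mul_sum] at hsum
  rw [Pi.sub_apply, wAct, rho_apply, hrho_b, inversionRoots,
    sum_image_posRoot_apply (fun p q => p < q ∧ b q < b p) fun _ _ h => h.1]
  linarith

lemma dotAct_eq_wAct_sub (w : Perm (Fin n)) (lam : Fin n → ℚ) :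
    dotAct w lam = wAct w lam - ∑ α ∈ inversionRoots w, α := by
  rw [← rho_sub_wAct_rho, dotAct]
  funext i
  simp only [wAct, Pi.add_apply, Pi.sub_apply]
  ring

lemma sum_posRoot_comp (w : Perm (Fin n)) (T : Finset (Fin n)) (p q : Fin n) :
    ∑ k ∈ T, posRoot p q (w k) =
      (if w⁻¹ p ∈ T then 1 else 0) - (if w⁻¹ q ∈ T then 1 else 0) := by
  simp only [posRoot_apply, sum_sub_distrib, ← Perm.eq_inv_iff_eq, sum_ite_eq']

lemma ite_mem_le_ite_mem_of_le {α : Type*} [Preorder α] [DecidableEq α] {T : Finset α}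
    (hT : IsLowerSet (T : Set α)) {a b : α} (hab : a ≤ b) :
    (if b ∈ T then 1 else 0 : ℚ) ≤ if a ∈ T then 1 else 0 := by
  split_ifs with hb ha
  exacts [le_rfl, absurd (hT hab hb) ha, zero_le_one, le_rfl]

lemma sum_le_sum_comp_dotAct_add (w : Perm (Fin n)) (lam : Fin n → ℚ)
    {I : Finset (Fin n → ℚ)} (hI : I ⊆ PosRoots n) {T : Finset (Fin n)}
    (hT : IsLowerSet (T : Set (Fin n))) :
    ∑ k ∈ T, lam k ≤ ∑ k ∈ T, (dotAct w lam + ∑ α ∈ I, α) (w k) := by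
  set φ : (Fin n → ℚ) → ℚ := fun v => ∑ k ∈ T, v (w k)
  have hφ_sum : ∀ s : Finset (Fin n → ℚ), φ (∑ α ∈ s, α) = ∑ α ∈ s, φ α := fun s => by
    simp only [φ, Finset.sum_apply]
    exact Finset.sum_comm
  have hφ_nonpos : ∀ α ∈ inversionRoots w, φ α ≤ 0 := by
    simp only [inversionRoots, mem_image, mem_filter, mem_univ, true_and]
    rintro _ ⟨⟨p, q⟩, ⟨-, hqp⟩, rfl⟩
    exact (sum_posRoot_comp w T p q).trans_le
      (sub_nonpos.2 (ite_mem_le_ite_mem_of_le hT hqp.le))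
  have hφ_nonneg : ∀ α ∈ PosRoots n, α ∉ inversionRoots w → 0 ≤ φ α := by
    simp only [PosRoots, inversionRoots, mem_image, mem_filter, mem_univ, true_and]
    rintro _ ⟨⟨p, q⟩, hpq, rfl⟩ hα
    have hpq' : w⁻¹ p ≤ w⁻¹ q := not_lt.1 fun h => hα ⟨(p, q), ⟨hpq, h⟩, rfl⟩
    exact (sub_nonneg.2 (ite_mem_le_ite_mem_of_le hT hpq')).trans_eq
      (sum_posRoot_comp w T p q).symm
  have hinv : ∑ α ∈ inversionRoots w, φ α ≤ ∑ α ∈ I, φ α :=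
    calc ∑ α ∈ inversionRoots w, φ α
        ≤ ∑ α ∈ I ∩ inversionRoots w, φ α :=
          sum_le_sum_of_subset_of_nonpos' inter_subset_right fun α hα _ => hφ_nonpos α hα
      _ ≤ ∑ α ∈ I, φ α :=
          sum_le_sum_of_subset_of_nonneg inter_subset_left fun α hα hα' =>
            hφ_nonneg α (hI hα) fun h => hα' (mem_inter.2 ⟨hα, h⟩)
  have hφ_dot : φ (dotAct w lam + ∑ α ∈ I, α) =
      ∑ k ∈ T, lam k - φ (∑ α ∈ inversionRoots w, α) + φ (∑ α ∈ I, α) := by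
    simp only [φ, dotAct_eq_wAct_sub, Pi.add_apply, Pi.sub_apply, sum_add_distrib,
      sum_sub_distrib, wAct, Perm.coe_inv, symm_apply_apply]
  change _ ≤ φ _
  rw [hφ_dot, hφ_sum, hφ_sum]
  linarith

lemma Equiv.Perm.eq_one_of_sum_Iic_le {α β : Type*} [LinearOrder α] [LocallyFiniteOrderBot α]
    [WellFoundedLT α] [AddCommGroup β] [LinearOrder β] [IsOrderedAddMonoid β] {f : α → β}
    (hf : StrictAnti f) {σ : Perm α} (h : ∀ j, ∑ k ∈ Iic j, f k ≤ ∑ k ∈ Iic j, f (σ k)) :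
    σ = 1 := by
  refine Equiv.ext fun j => ?_
  induction j using WellFoundedLT.induction with
  | ind j ih =>
    have hle : f j ≤ f (σ j) := by
      have hbelow : ∑ k ∈ Iio j, f (σ k) = ∑ k ∈ Iio j, f k :=
        sum_congr rfl fun k hk => by rw [ih k (mem_Iio.1 hk), Perm.one_apply]
      have := h j
      rw [Iic_eq_cons_Iio, sum_cons, sum_cons, hbelow] at this
      exact le_of_add_le_add_right this
    rcases lt_trichotomy (σ j) j with hlt | heq | hgt
    · exact absurd (σ.injective (ih _ hlt)) hlt.ne
    · exact heq
    · exact absurd hle (not_le.2 (hf hgt))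

lemma Dominant.strictAnti {lam : Fin n → ℚ} (hdom : Dominant lam) (hreg : Regular lam) :
    StrictAnti lam := by
  cases n with
  | zero => exact fun i => i.elim0
  | succ n =>
    refine Fin.strictAnti_iff_succ_lt.2 fun i => lt_of_le_of_ne ?_ fun h => ?_
    · exact sub_nonneg.1 (hdom.2 _ _ (by simp))
    · obtain ⟨m, hm, hm'⟩ := hreg _ _ Fin.castSucc_lt_succ.ne'
      rw [h, sub_self] at hm'
      exact hm (by exact_mod_cast hm'.symm)

end

theorem lemma3_i_first_general {n : ℕ} (lam : Fin n → ℚ)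
    (hdom : Dominant lam) (hreg : Regular lam) (w : Equiv.Perm (Fin n)) :
    {v : Fin n → ℚ | ∃ I ⊆ PosRoots n, v = dotAct w lam + ∑ α ∈ I, α} ∩
      {v : Fin n → ℚ | ∃ w' : Equiv.Perm (Fin n), v = wAct w' lam} =
    {wAct w lam} := by
  ext v
  simp only [Set.mem_inter_iff, Set.mem_ofPred_eq, Set.mem_singleton_iff]
  constructor
  · rintro ⟨⟨I, hI, hv⟩, w', rfl⟩
    have hσ : w'⁻¹ * w = 1 := Perm.eq_one_of_sum_Iic_le (hdom.strictAnti hreg) fun j => by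
      have := sum_le_sum_comp_dotAct_add w lam hI (T := Iic j)
        (by rw [coe_Iic]; exact isLowerSet_Iic j)
      rwa [← hv] at this
    rw [inv_mul_eq_one.1 hσ]
  · rintro rfl
    refine ⟨⟨inversionRoots w, inversionRoots_subset w, ?_⟩, w, rfl⟩
    rw [dotAct_eq_wAct_sub, sub_add_cancel]

/-- Lemma 3(i), first equality: for dominant regular `lam` and `w` in `S_n`,
the intersection of `{w·lam} + P` with the orbit `W lam` is exactly `{w lam}`. -/
theorem lemma3_i_first {n : ℕ} (hn : 1 ≤ n) (lam : Fin n → ℚ)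
    (hdom : Dominant lam) (hreg : Regular lam) (w : Equiv.Perm (Fin n)) :
    {v : Fin n → ℚ | ∃ I ⊆ PosRoots n, v = dotAct w lam + ∑ α ∈ I, α} ∩
      {v : Fin n → ℚ | ∃ w' : Equiv.Perm (Fin n), v = wAct w' lam} =
    {wAct w lam} :=
  lemma3_i_first_general lam hdom hreg w
end

section
/- Let λ ∈ ℚ^n be dominant and regular and let w ∈ S_n. Then the intersection of the set { wλ − ∑_{α∈I} α : I ⊆ Φ⁺ } with the dot-orbit { w'·λ : w' ∈ S_n } is exactly the singleton { w·λ }. (This is the second equality of Lemma 3(i): ({wλ} − P) ∩ W·λ = {w·λ}.) -/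
open Finset

/-!
Put `μ = λ + ρ`. Twice `ρ − ∑_{α ∈ I} α` is the vector `out-degree − in-degree` of the
tournament on `{1, …, n}` obtained from the transitive one `i → j` (`i < j`) by reversing
the edges in `I`; `S_n` permutes tournaments, so `ρ − P` is `S_n`-stable. Hence
`w'·λ ∈ wλ − P` gives `uμ = μ − β` with `u = w⁻¹w'` and `β = ∑_{α ∈ T} α` for some
`T ⊆ Φ⁺`, and `|uμ| = |μ|` gives `|β|² = 2⟨μ, β⟩`. Dominance and regularity give
`⟨λ, β⟩ ≥ ⟨ρ, β⟩`, while the roots of `T` starting (or ending) at a fixed index have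
distinct lengths, which yields `|β|² + 2|T| ≤ 4⟨ρ, β⟩`. Together these force `T = ∅`,
i.e. `w'·λ = w·λ`.
-/

open Matrix

section

variable {n : ℕ}

def posPairs (n : ℕ) : Finset (Fin n × Fin n) := univ.filter fun p => p.1 < p.2

def rootSum (S : Finset (Fin n × Fin n)) : Fin n → ℚ := ∑ p ∈ S, posRoot p.1 p.2

lemma posRoot_eq_single_sub_single (i j : Fin n) :
    posRoot i j = Pi.single i 1 - Pi.single j 1 := by
  funext k
  simp [posRoot, Pi.single_apply]

lemma posRoot_swap (i j : Fin n) : posRoot j i = -posRoot i j := by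
  simp only [posRoot_eq_single_sub_single, neg_sub]

lemma dotProduct_posRoot (v : Fin n → ℚ) (i j : Fin n) : v ⬝ᵥ posRoot i j = v i - v j := by
  simp [posRoot_eq_single_sub_single, dotProduct_sub, dotProduct_single]

lemma mem_posPairs {p : Fin n × Fin n} : p ∈ posPairs n ↔ p.1 < p.2 := by
  simp [posPairs]

lemma posRoot_injOn_s1 : Set.InjOn (fun p : Fin n × Fin n => posRoot p.1 p.2) (posPairs n) := by
  rintro ⟨i, j⟩ hij ⟨k, l⟩ hkl h
  simp only [Finset.mem_coe, mem_posPairs] at hij hkl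
  have hi := congr_fun h i
  have hj := congr_fun h j
  simp only [posRoot, if_neg hij.ne, if_neg hij.ne'] at hi hj
  split_ifs at hi hj <;> grind

lemma rootSum_empty : rootSum (∅ : Finset (Fin n × Fin n)) = 0 := Finset.sum_empty

lemma rootSum_apply (S : Finset (Fin n × Fin n)) (k : Fin n) :
    rootSum S k = #(S.filter fun p => p.1 = k) - #(S.filter fun p => p.2 = k) := by
  simp only [rootSum, Finset.sum_apply, posRoot, Finset.sum_sub_distrib, Finset.sum_boole]
  simp only [eq_comm]

lemma exists_subset_posRoots_iff (P : (Fin n → ℚ) → Prop) :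
    (∃ I ⊆ PosRoots n, P (∑ α ∈ I, α)) ↔ ∃ T ⊆ posPairs n, P (rootSum T) := by
  have hsum : ∀ T ⊆ posPairs n,
      ∑ α ∈ T.image (fun p => posRoot p.1 p.2), α = rootSum T := fun T hT =>
    Finset.sum_image fun p hp q hq => posRoot_injOn_s1 (hT hp) (hT hq)
  rw [PosRoots]
  simp only [Finset.subset_image_iff]
  constructor
  · rintro ⟨_, ⟨T, hT, rfl⟩, hP⟩
    exact ⟨T, hT, hsum T hT ▸ hP⟩
  · rintro ⟨T, hT, hP⟩
    exact ⟨_, ⟨T, hT, rfl⟩, (hsum T hT).symm ▸ hP⟩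

lemma rho_eq_half_rootSum : rho n = (1 / 2 : ℚ) • rootSum (posPairs n) := by
  rw [rho, rootSum]
  exact congrArg _ (Finset.sum_image posRoot_injOn_s1)

lemma card_posPairs_filter_fst (k : Fin n) :
    #((posPairs n).filter fun p => p.1 = k) = #(Finset.Ioi k) := by
  refine Finset.card_nbij' Prod.snd (fun j => (k, j)) ?_ ?_ ?_ ?_ <;>
    grind [Set.MapsTo, Set.LeftInvOn, mem_posPairs]

lemma card_posPairs_filter_snd (k : Fin n) :
    #((posPairs n).filter fun p => p.2 = k) = #(Finset.Iio k) := by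
  refine Finset.card_nbij' Prod.fst (fun i => (i, k)) ?_ ?_ ?_ ?_ <;>
    grind [Set.MapsTo, Set.LeftInvOn, mem_posPairs]

lemma rho_sub_rho (a b : Fin n) : rho n a - rho n b = (b : ℚ) - a := by
  have h (k : Fin n) : rho n k = ((n : ℚ) - 1 - 2 * k) / 2 := by
    have hk := k.isLt
    rw [rho_eq_half_rootSum, Pi.smul_apply, rootSum_apply, card_posPairs_filter_fst,
      card_posPairs_filter_snd, Fin.card_Ioi, Fin.card_Iio, smul_eq_mul,
      Nat.cast_sub (show (k : ℕ) ≤ n - 1 by omega), Nat.cast_sub (show 1 ≤ n by omega)]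
    push_cast
    ring
  rw [h, h]
  ring

lemma wAct_add (u : Equiv.Perm (Fin n)) (x y : Fin n → ℚ) :
    wAct u (x + y) = wAct u x + wAct u y := rfl

lemma wAct_smul (u : Equiv.Perm (Fin n)) (c : ℚ) (x : Fin n → ℚ) :
    wAct u (c • x) = c • wAct u x := rfl

lemma wAct_one (x : Fin n → ℚ) : wAct 1 x = x := rfl

lemma wAct_mul (u v : Equiv.Perm (Fin n)) (x : Fin n → ℚ) :
    wAct (u * v) x = wAct u (wAct v x) := rfl

lemma wAct_dotProduct_wAct (u : Equiv.Perm (Fin n)) (x y : Fin n → ℚ) :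
    wAct u x ⬝ᵥ wAct u y = x ⬝ᵥ y :=
  Equiv.sum_comp u⁻¹ fun i => x i * y i

lemma wAct_posRoot (u : Equiv.Perm (Fin n)) (i j : Fin n) :
    wAct u (posRoot i j) = posRoot (u i) (u j) := by
  funext k
  simp only [wAct, posRoot, Equiv.Perm.inv_eq_iff_eq]

lemma wAct_rootSum (u : Equiv.Perm (Fin n)) (S : Finset (Fin n × Fin n)) :
    wAct u (rootSum S) = rootSum (S.map (u.prodCongr u).toEmbedding) := by
  simp only [rootSum, Finset.sum_map, Equiv.coe_toEmbedding, Equiv.prodCongr_apply,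
    Prod.map_fst, Prod.map_snd, ← wAct_posRoot]
  funext k
  simp only [wAct, Finset.sum_apply]

def IsTournament (O : Finset (Fin n × Fin n)) : Prop :=
  ∀ i j, (i, j) ∈ O ↔ i ≠ j ∧ (j, i) ∉ O

def tournamentOf (S : Finset (Fin n × Fin n)) : Finset (Fin n × Fin n) :=
  (posPairs n \ S) ∪ S.map (Equiv.prodComm _ _).toEmbedding

lemma mem_tournamentOf {S : Finset (Fin n × Fin n)} {i j : Fin n} :
    (i, j) ∈ tournamentOf S ↔ i < j ∧ (i, j) ∉ S ∨ (j, i) ∈ S := by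
  simp [tournamentOf, mem_posPairs]

lemma isTournament_tournamentOf {S : Finset (Fin n × Fin n)} (hS : S ⊆ posPairs n) :
    IsTournament (tournamentOf S) := by
  have hlt : ∀ {i j}, (i, j) ∈ S → i < j := fun h => mem_posPairs.mp (hS h)
  intro i j
  simp only [mem_tournamentOf]
  rcases lt_trichotomy i j with h | rfl | h <;> grind

lemma IsTournament.map {O : Finset (Fin n × Fin n)} (hO : IsTournament O)
    (u : Equiv.Perm (Fin n)) : IsTournament (O.map (u.prodCongr u).toEmbedding) := by
  intro i j
  simp [Finset.mem_map_equiv, hO (u.symm i), u.symm.injective.ne_iff]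

lemma tournamentOf_filter_swap_mem {O : Finset (Fin n × Fin n)} (hO : IsTournament O) :
    tournamentOf ((posPairs n).filter fun p => p.swap ∈ O) = O := by
  ext ⟨i, j⟩
  simp only [mem_tournamentOf, Finset.mem_filter, mem_posPairs, Prod.swap_prod_mk]
  have := hO i j
  have := hO j i
  rcases lt_trichotomy i j with h | rfl | h <;> grind

lemma rootSum_tournamentOf {S : Finset (Fin n × Fin n)} (hS : S ⊆ posPairs n) :
    rootSum (tournamentOf S) = (2 : ℚ) • (rho n - rootSum S) := by
  have hdisj : Disjoint (posPairs n \ S) (S.map (Equiv.prodComm _ _).toEmbedding) := by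
    rw [Finset.disjoint_left]
    intro ⟨i, j⟩ h h'
    simp only [Finset.mem_sdiff, mem_posPairs, Finset.mem_map_equiv] at h h'
    exact h.1.asymm (mem_posPairs.mp (hS h'))
  have hswap : rootSum (S.map (Equiv.prodComm _ _).toEmbedding) = -rootSum S := by
    rw [rootSum, rootSum, Finset.sum_map, ← Finset.sum_neg_distrib]
    exact Finset.sum_congr rfl fun p _ => posRoot_swap p.1 p.2
  rw [tournamentOf, rootSum, Finset.sum_union hdisj, Finset.sum_sdiff_eq_sub hS, ← rootSum,
    ← rootSum, ← rootSum, hswap, rho_eq_half_rootSum, smul_sub, smul_smul, two_smul]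
  norm_num
  abel

lemma exists_wAct_rho_sub_rootSum (u : Equiv.Perm (Fin n)) {S : Finset (Fin n × Fin n)}
    (hS : S ⊆ posPairs n) :
    ∃ T ⊆ posPairs n, wAct u (rho n - rootSum S) = rho n - rootSum T := by
  set O := (tournamentOf S).map (u.prodCongr u).toEmbedding
  have hO : IsTournament O := (isTournament_tournamentOf hS).map u
  refine ⟨(posPairs n).filter fun p => p.swap ∈ O, Finset.filter_subset _ _,
    smul_right_injective _ (two_ne_zero (α := ℚ)) ?_⟩
  dsimp only
  rw [← rootSum_tournamentOf (Finset.filter_subset _ _), tournamentOf_filter_swap_mem hO,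
    ← wAct_rootSum, rootSum_tournamentOf hS, wAct_smul]

lemma card_mul_card_add_one_le_two_mul_sum (s : Finset ℕ) (hs : ∀ x ∈ s, 1 ≤ x) :
    #s * (#s + 1) ≤ 2 * ∑ x ∈ s, x := by
  induction s using Finset.induction_on_max with
  | empty => simp
  | insert a s hlt ih =>
    have hsub : s ⊆ Finset.Ico 1 a := fun x hx =>
      Finset.mem_Ico.mpr ⟨hs x (Finset.mem_insert_of_mem hx), hlt x hx⟩
    have hcard : #s + 1 ≤ a := by
      have := Finset.card_le_card hsub
      rw [Nat.card_Ico] at this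
      have := hs a (Finset.mem_insert_self a s)
      omega
    have ha : a ∉ s := fun h => (hlt a h).false
    have := ih fun x hx => hs x (Finset.mem_insert_of_mem hx)
    rw [Finset.card_insert_of_notMem ha, Finset.sum_insert ha]
    nlinarith

lemma sum_sq_card_fiber_add_card_le {ι κ : Type*} [DecidableEq κ] [Fintype κ] (T : Finset ι)
    (g : ι → κ) (len : ι → ℕ) (hpos : ∀ p ∈ T, 1 ≤ len p)
    (hinj : ∀ k, Set.InjOn len (T.filter fun p => g p = k)) :
    ∑ k, #(T.filter fun p => g p = k) ^ 2 + #T ≤ 2 * ∑ p ∈ T, len p := by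
  have hfiber (k : κ) :
      #(T.filter fun p => g p = k) * (#(T.filter fun p => g p = k) + 1) ≤
        2 * ∑ p ∈ T.filter (fun p => g p = k), len p := by
    have := card_mul_card_add_one_le_two_mul_sum ((T.filter fun p => g p = k).image len)
      (by
        simp only [Finset.mem_image, Finset.mem_filter]
        rintro _ ⟨p, ⟨hp, -⟩, rfl⟩
        exact hpos p hp)
    rwa [Finset.card_image_of_injOn (hinj k), Finset.sum_image (hinj k)] at this
  calc ∑ k, #(T.filter fun p => g p = k) ^ 2 + #T
      = ∑ k, #(T.filter fun p => g p = k) * (#(T.filter fun p => g p = k) + 1) := by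
        rw [Finset.card_eq_sum_card_fiberwise (fun p _ => Finset.mem_univ (g p)),
          ← Finset.sum_add_distrib]
        exact Finset.sum_congr rfl fun k _ => by ring
    _ ≤ ∑ k, 2 * ∑ p ∈ T.filter (fun p => g p = k), len p :=
        Finset.sum_le_sum fun k _ => hfiber k
    _ = 2 * ∑ p ∈ T, len p := by
        rw [← Finset.mul_sum, Finset.sum_fiberwise_of_maps_to fun p _ => Finset.mem_univ (g p)]

lemma dotProduct_rootSum (v : Fin n → ℚ) (T : Finset (Fin n × Fin n)) :
    v ⬝ᵥ rootSum T = ∑ p ∈ T, (v p.1 - v p.2) := by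
  simp only [rootSum, dotProduct_sum, dotProduct_posRoot]

lemma dotProduct_rootSum_le {x y : Fin n → ℚ} {T : Finset (Fin n × Fin n)}
    (hT : T ⊆ posPairs n) (h : ∀ a b, a < b → x a - x b ≤ y a - y b) : x ⬝ᵥ rootSum T ≤ y ⬝ᵥ rootSum T := by
  rw [dotProduct_rootSum, dotProduct_rootSum]
  exact Finset.sum_le_sum fun p hp => h _ _ (mem_posPairs.mp (hT hp))

lemma rootSum_dotProduct_self_add_card_le {T : Finset (Fin n × Fin n)} (hT : T ⊆ posPairs n) :
    rootSum T ⬝ᵥ rootSum T + 2 * #T ≤ 4 * (rho n ⬝ᵥ rootSum T) := by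
  have hlt : ∀ p ∈ T, p.1 < p.2 := fun p hp => mem_posPairs.mp (hT hp)
  set len : Fin n × Fin n → ℕ := fun p => (p.2 : ℕ) - p.1
  have hpos : ∀ p ∈ T, 1 ≤ len p := fun p hp => by have := hlt p hp; simp only [len]; omega
  have hfst := sum_sq_card_fiber_add_card_le T Prod.fst len hpos fun k p hp q hq h => by
    simp only [Finset.mem_coe, Finset.mem_filter] at hp hq
    have := hlt p hp.1; have := hlt q hq.1
    ext <;> simp only [len] at h <;> omega
  have hsnd := sum_sq_card_fiber_add_card_le T Prod.snd len hpos fun k p hp q hq h => by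
    simp only [Finset.mem_coe, Finset.mem_filter] at hp hq
    have := hlt p hp.1; have := hlt q hq.1
    ext <;> simp only [len] at h <;> omega
  have hrho : rho n ⬝ᵥ rootSum T = ((∑ p ∈ T, len p : ℕ) : ℚ) := by
    rw [dotProduct_rootSum, Nat.cast_sum]
    refine Finset.sum_congr rfl fun p hp => ?_
    rw [rho_sub_rho, Nat.cast_sub (hlt p hp).le]
  have hsq : rootSum T ⬝ᵥ rootSum T ≤
      ∑ k, (#(T.filter fun p => p.1 = k) ^ 2 + #(T.filter fun p => p.2 = k) ^ 2 : ℚ) := by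
    refine Finset.sum_le_sum fun k _ => ?_
    rw [rootSum_apply]
    have h1 := Nat.cast_nonneg (α := ℚ) #(T.filter fun p => p.1 = k)
    have h2 := Nat.cast_nonneg (α := ℚ) #(T.filter fun p => p.2 = k)
    nlinarith [mul_nonneg h1 h2]
  have hfst' : ∑ k, (#(T.filter fun p => p.1 = k) ^ 2 : ℚ) + #T ≤
      2 * ((∑ p ∈ T, len p : ℕ) : ℚ) := by
    exact_mod_cast hfst
  have hsnd' : ∑ k, (#(T.filter fun p => p.2 = k) ^ 2 : ℚ) + #T ≤
      2 * ((∑ p ∈ T, len p : ℕ) : ℚ) := by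
    exact_mod_cast hsnd
  rw [Finset.sum_add_distrib] at hsq
  linarith

lemma Dominant.sub_le_sub_of_regular {lam : Fin n → ℚ} (hdom : Dominant lam)
    (hreg : Regular lam) {a b : Fin n} (hab : a ≤ b) : (b : ℚ) - a ≤ lam a - lam b := by
  have hstep (i j : Fin n) (hij : (i : ℕ) + 1 = j) : 1 ≤ lam i - lam j := by
    obtain ⟨m, hm0, hm⟩ := hreg i j (Fin.ne_of_val_ne (by omega))
    have := hdom.2 i j hij
    rw [hm] at this ⊢
    have h0 : (0 : ℤ) ≤ m := by exact_mod_cast this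
    have h1 : (1 : ℤ) ≤ m := by omega
    exact_mod_cast h1
  obtain ⟨d, hd⟩ : ∃ d, (b : ℕ) = a + d := ⟨b - a, by rw [Fin.le_def] at hab; omega⟩
  induction d generalizing b with
  | zero => simp [Fin.ext hd]
  | succ d ih =>
    have hc : (a : ℕ) + d < n := by omega
    have := ih (b := ⟨a + d, hc⟩) (by rw [Fin.le_def]; simp) rfl
    have := hstep ⟨a + d, hc⟩ b (by simp only; omega)
    push_cast [hd] at *
    linarith

lemma eq_empty_of_wAct_eq_sub_rootSum {lam : Fin n → ℚ} {u : Equiv.Perm (Fin n)}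
    {T : Finset (Fin n × Fin n)} (hT : T ⊆ posPairs n)
    (hlam : ∀ a b, a < b → rho n a - rho n b ≤ lam a - lam b)
    (h : wAct u (lam + rho n) = lam + rho n - rootSum T) : T = ∅ := by
  have hnorm := wAct_dotProduct_wAct u (lam + rho n) (lam + rho n)
  rw [h] at hnorm
  simp only [sub_dotProduct, dotProduct_sub, dotProduct_comm (rootSum T) (lam + rho n),
    add_dotProduct] at hnorm
  have hlow := dotProduct_rootSum_le hT hlam
  have hup := rootSum_dotProduct_self_add_card_le hT
  have : (#T : ℚ) ≤ 0 := by linarith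
  exact Finset.card_eq_zero.mp (by exact_mod_cast this.antisymm (Nat.cast_nonneg _))

end

theorem lemma3_i_second_general {n : ℕ} (lam : Fin n → ℚ)
    (hdom : Dominant lam) (hreg : Regular lam) (w : Equiv.Perm (Fin n)) :
    {v : Fin n → ℚ | ∃ I ⊆ PosRoots n, v = wAct w lam - ∑ α ∈ I, α} ∩
      {v : Fin n → ℚ | ∃ w' : Equiv.Perm (Fin n), v = dotAct w' lam} =
    {dotAct w lam} := by
  have hlam (a b : Fin n) (hab : a < b) : rho n a - rho n b ≤ lam a - lam b := by
    rw [rho_sub_rho]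
    exact hdom.sub_le_sub_of_regular hreg hab.le
  ext v
  have hP := exists_subset_posRoots_iff fun β => v = wAct w lam - β
  simp only [Set.mem_inter_iff, Set.mem_ofPred_eq, Set.mem_singleton_iff, hP]
  constructor
  · rintro ⟨⟨S, hS, rfl⟩, w', hw'⟩
    obtain ⟨T, hT, hST⟩ := exists_wAct_rho_sub_rootSum w⁻¹ hS
    have hw'μ : wAct w' (lam + rho n) = wAct w lam + (rho n - rootSum S) := by
      rw [← sub_add_cancel (wAct w' (lam + rho n)) (rho n), ← dotAct, ← hw']
      abel
    have hfix : wAct (w⁻¹ * w') (lam + rho n) = lam + rho n - rootSum T := by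
      rw [wAct_mul, hw'μ, wAct_add, ← wAct_mul, inv_mul_cancel, wAct_one, hST]
      abel
    rw [eq_empty_of_wAct_eq_sub_rootSum hT hlam hfix, rootSum_empty, sub_zero] at hfix
    rw [hw']
    calc dotAct w' lam = wAct (w * (w⁻¹ * w')) (lam + rho n) - rho n := by
          rw [mul_inv_cancel_left]; rfl
      _ = dotAct w lam := by rw [wAct_mul, hfix]; rfl
  · rintro rfl
    obtain ⟨T, hT, hwρ⟩ := exists_wAct_rho_sub_rootSum w (Finset.empty_subset _)
    rw [rootSum_empty, sub_zero] at hwρ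
    refine ⟨⟨T, hT, ?_⟩, w, rfl⟩
    rw [dotAct, wAct_add, hwρ]
    abel

/-- Lemma 3(i), second equality: for dominant regular `lam` and `w` in `S_n`,
the intersection of `{w lam} - P` with the dot-orbit is exactly `{w·lam}`. -/
theorem lemma3_i_second {n : ℕ} (hn : 1 ≤ n) (lam : Fin n → ℚ)
    (hdom : Dominant lam) (hreg : Regular lam) (w : Equiv.Perm (Fin n)) :
    {v : Fin n → ℚ | ∃ I ⊆ PosRoots n, v = wAct w lam - ∑ α ∈ I, α} ∩
      {v : Fin n → ℚ | ∃ w' : Equiv.Perm (Fin n), v = dotAct w' lam} =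
    {dotAct w lam} :=
  lemma3_i_second_general lam hdom hreg w
end
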